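/- Let E be the Banach algebra of continuous ℂ-linear endomorphisms of the space of n×n complex matrices, let A ∈ E, and suppose exp(t A) converges to some Λ ∈ E as t → +∞ (t real). Then Λ∘Λ = Λ, A∘Λ = 0, and Λ∘A = 0. -/

import Mathlib

open Filter

attribute [local instance] Matrix.linftyOpNormedAddCommGroup Matrix.linftyOpNormedSpace

instance instMatCLMIsTopologicalRing (n : ℕ) :
    IsTopologicalRing (Matrix (Fin n) (Fin n) ℂ →L[ℂ] Matrix (Fin n) (Fin n) ℂ) :=
  @NonUnitalSeminormedRing.toIsTopologicalRing _
    (@NormedRing.toSeminormedRing _ ContinuousLinearMap.toNormedRing).toNonUnitalSeminormedRing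

/-!
Write `T t = exp (t • A)`. Since `T (s + t) = T s * T t`, letting `t → ∞` gives
`T s * Λ = Λ = Λ * T s` for every `s`; letting `s → ∞` in turn gives `Λ * Λ = Λ`, and
differentiating at `s = 0`, where `T' 0 = A`, gives `A * Λ = 0 = Λ * A`.
-/

open Topology

namespace Filter.Tendsto

variable {M : Type*} [Mul M] [TopologicalSpace M] [ContinuousMul M] [T2Space M]
  {f : ℝ → M} {Λ : M}

theorem apply_mul_eq_of_map_add (hf : ∀ s t, f (s + t) = f s * f t)
    (hΛ : Tendsto f atTop (𝓝 Λ)) (s : ℝ) : f s * Λ = Λ :=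
  tendsto_nhds_unique (hΛ.const_mul (f s)) <| by
    simpa only [Function.comp_def, id, hf] using
      hΛ.comp (tendsto_atTop_add_const_left atTop s tendsto_id)

theorem mul_apply_eq_of_map_add (hf : ∀ s t, f (s + t) = f s * f t)
    (hΛ : Tendsto f atTop (𝓝 Λ)) (s : ℝ) : Λ * f s = Λ :=
  tendsto_nhds_unique (hΛ.mul_const (f s)) <| by
    simpa only [Function.comp_def, id, hf] using
      hΛ.comp (tendsto_atTop_add_const_right atTop s tendsto_id)

theorem isIdempotentElem_of_map_add (hf : ∀ s t, f (s + t) = f s * f t)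
    (hΛ : Tendsto f atTop (𝓝 Λ)) : IsIdempotentElem Λ :=
  (tendsto_const_nhds_iff.mp <| (hΛ.mul_const Λ).congr (hΛ.apply_mul_eq_of_map_add hf)).symm

end Filter.Tendsto

namespace HasDerivAt

variable {𝕜 𝔸 : Type*} [NontriviallyNormedField 𝕜] [NormedRing 𝔸] [NormedAlgebra 𝕜 𝔸]
  {f : 𝕜 → 𝔸} {a b : 𝔸} {x : 𝕜}

theorem mul_eq_zero_of_apply_mul_eq (hf : HasDerivAt f a x) (h : ∀ s, f s * b = b) :
    a * b = 0 :=
  (hf.mul_const b).unique <| (funext h).symm ▸ hasDerivAt_const x b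

theorem mul_eq_zero_of_mul_apply_eq (hf : HasDerivAt f a x) (h : ∀ s, b * f s = b) :
    b * a = 0 :=
  (hf.const_mul b).unique <| (funext h).symm ▸ hasDerivAt_const x b

end HasDerivAt

namespace NormedSpace

variable {𝔸 : Type*} [NormedRing 𝔸] [NormedAlgebra ℝ 𝔸] [CompleteSpace 𝔸]

theorem exp_add_smul (A : 𝔸) (s t : ℝ) : exp ((s + t) • A) = exp (s • A) * exp (t • A) := by
  let := NormedAlgebra.restrictScalars ℚ ℝ 𝔸
  rw [add_smul]
  exact exp_add_of_commute (((Commute.refl A).smul_left s).smul_right t)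

theorem hasDerivAt_exp_smul_const_zero (A : 𝔸) :
    HasDerivAt (fun t : ℝ => exp (t • A)) A 0 := by
  simpa using hasDerivAt_exp_smul_const' A (0 : ℝ)

theorem isIdempotentElem_and_mul_eq_zero_of_tendsto_exp_smul {A Λ : 𝔸}
    (hΛ : Tendsto (fun t : ℝ => exp (t • A)) atTop (𝓝 Λ)) :
    IsIdempotentElem Λ ∧ A * Λ = 0 ∧ Λ * A = 0 :=
  ⟨hΛ.isIdempotentElem_of_map_add (exp_add_smul A),
    (hasDerivAt_exp_smul_const_zero A).mul_eq_zero_of_apply_mul_eq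
      (hΛ.apply_mul_eq_of_map_add (exp_add_smul A)),
    (hasDerivAt_exp_smul_const_zero A).mul_eq_zero_of_mul_apply_eq
      (hΛ.mul_apply_eq_of_map_add (exp_add_smul A))⟩

end NormedSpace

/-- if `e^{t A} → Λ` as `t → +∞` then `Λ` is idempotent and
`A Λ = Λ A = 0`. -/
theorem stmt11 (n : ℕ)
    (A Λ : Matrix (Fin n) (Fin n) ℂ →L[ℂ] Matrix (Fin n) (Fin n) ℂ)
    (hΛ : Tendsto (fun t : ℝ => NormedSpace.exp (t • A)) atTop (nhds Λ)) :
    Λ * Λ = Λ ∧ A * Λ = 0 ∧ Λ * A = 0 := by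
  -- The matrix norm is only a local instance, so instance search does not find the
  -- operator-norm structures on the space of superoperators; they are supplied by hand.
  let : NormedRing (Matrix (Fin n) (Fin n) ℂ →L[ℂ] Matrix (Fin n) (Fin n) ℂ) :=
    ContinuousLinearMap.toNormedRing
  let : NormedAlgebra ℂ (Matrix (Fin n) (Fin n) ℂ →L[ℂ] Matrix (Fin n) (Fin n) ℂ) :=
    ContinuousLinearMap.toNormedAlgebra
  exact @NormedSpace.isIdempotentElem_and_mul_eq_zero_of_tendsto_exp_smul _ _ _
    (@FiniteDimensional.complete ℂ _ _ _ _ _ _ SeminormedAddCommGroup.to_isUniformAddGroup _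
      (@IsBoundedSMul.continuousSMul _ _ _ _ _ _ _ NormedSpace.toIsBoundedSMul) _)
    A Λ hΛ
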